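/- Let s be a primitive string of length n over Σ, let π be a local ordering family (of order 1), and let x = x1x2⋯xm be a string with 2 ≤ m ≤ n. Let i_1 < i_2 < ⋯ < i_t be the elements of { i ∈ Rng(x2) : L[i] = x1 }, listed in increasing order, and assume Rng(x1x2) ≠ ∅ with b = min Rng(x1x2). Then Rng(x1x2⋯xm) = { b + r − 1 : 1 ≤ r ≤ t and i_r ∈ Rng(x2x3⋯xm) }. -/

import Mathlib

/-- The cyclic rotation of `s` by `r`: `s[r+1..n] s[1..r]`. -/
def rot {α : Type*} (s : List α) (r : ℕ) : List α := s.drop r ++ s.take r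

/-- A string is primitive if its cyclic rotations are pairwise distinct. -/
def IsPrimitive {α : Type*} (s : List α) : Prop :=
  ∀ r₁ r₂ : ℕ, r₁ < s.length → r₂ < s.length → rot s r₁ = rot s r₂ → r₁ = r₂

/-- The context adaptive order induced by a family `π` of linear orders on the
alphabet, one for each string (context): `u ≺ v` iff, `x = u[1..k] = v[1..k]`
being the longest common prefix of `u` and `v`, the symbol `u[k+1]` is
`π x`-smaller than `v[k+1]`. -/
def caLt {α : Type*} (π : List α → LinearOrder α) (u v : List α) : Prop :=
  ∃ (k : ℕ) (hu : k < u.length) (hv : k < v.length),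
    u.take k = v.take k ∧ (π (u.take k)).lt (u.get ⟨k, hu⟩) (v.get ⟨k, hv⟩)

/-- The matrix `M*(s)`: an enumeration of the cyclic rotations of `s`
listed in `≺`-increasing order; the `i`-th row is `row i`. -/
structure SortedRotMatrix {α : Type*} (π : List α → LinearOrder α) (s : List α) where
  row : Fin s.length → List α
  row_is_rot : ∀ i, ∃ r : Fin s.length, row i = rot s (r : ℕ)
  rot_is_row : ∀ r : Fin s.length, ∃ i, row i = rot s (r : ℕ)
  sorted : ∀ i j : Fin s.length, i < j → caLt π (row i) (row j)

/-- `Rng M x`: the set of row indices of `M*(s)` whose row has `x` as a prefix. -/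
def Rng {α : Type*} [DecidableEq α] {π : List α → LinearOrder α} {s : List α}
    (M : SortedRotMatrix π s) (x : List α) : Finset (Fin s.length) :=
  Finset.univ.filter (fun i => x <+: M.row i)

/-- `π` is a local ordering family (of order 1): the order `π x` depends only on
the last symbol of `x` (for nonempty `x`). -/
def IsLocalOrdering {α : Type*} (π : List α → LinearOrder α) : Prop :=
  ∀ x y : List α, x ≠ [] → y ≠ [] → x.getLast? = y.getLast? →
    ∀ a b : α, (π x).lt a b ↔ (π y).lt a b

/-!
Moving the first symbol of a row to its end (the map `psi`, inverse of the LF-mapping) sends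
`Rng(x₁x₂)` bijectively onto the rows of `Rng(x₂)` whose last symbol is `x₁`. Under a local
ordering `psi` is monotone there: comparing `x₁w` with `x₁w'` is the same as comparing `wx₁`
with `w'x₁`, since both first differences lie inside `w` and their contexts end in the same
symbol. As `Rng(x₁x₂)` is an interval starting at `b`, the `r`-th of those rows is
`psi (b + r - 1)`, and `x₁x₂⋯x_m` is a prefix of row `b + r - 1` iff `x₂⋯x_m` is a prefix of
its `psi`-image.
-/

section

variable {α : Type*} {π : List α → LinearOrder α}

theorem caLt_irrefl (u : List α) : ¬ caLt π u u := by
  rintro ⟨k, _, _, _, hlt⟩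
  simp at hlt

theorem caLt_asymm {u v : List α} (huv : caLt π u v) (hvu : caLt π v u) : False := by
  obtain ⟨k, hku, hkv, hk, hlt⟩ := huv
  obtain ⟨k', hk'v, hk'u, hk', hlt'⟩ := hvu
  simp only [List.get_eq_getElem] at hlt hlt'
  have agree {l l' : List α} {n m : ℕ} (h : l.take n = l'.take n) (hm : m < n)
      (hml : m < l.length) (hml' : m < l'.length) : l[m] = l'[m] := by
    have := List.getElem_of_eq h (by simp; omega : m < (l.take n).length)
    rwa [List.getElem_take, List.getElem_take] at this
  rcases lt_trichotomy k k' with h | rfl | h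
  · rw [agree hk' h hkv hku] at hlt
    simp at hlt
  · rw [← hk] at hlt'
    let := π (u.take k)
    exact lt_asymm hlt hlt'
  · rw [agree hk h hk'u hk'v] at hlt'
    simp at hlt'

theorem caLt.take_eq_or_caLt {u v : List α} (h : caLt π u v) (n : ℕ) :
    u.take n = v.take n ∨ caLt π (u.take n) (v.take n) := by
  obtain ⟨k, hu, hv, hk, hlt⟩ := h
  rcases le_or_gt n k with hnk | hkn
  · left
    simpa [List.take_take, min_eq_left hnk] using congrArg (List.take n) hk
  · right
    have htake (l : List α) : (l.take n).take k = l.take k := by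
      rw [List.take_take, min_eq_left hkn.le]
    refine ⟨k, by simp; omega, by simp; omega, by rw [htake, htake, hk], ?_⟩
    rw [htake]
    simpa using hlt

theorem caLt_of_append_right {w w' z : List α} (hlen : w.length = w'.length)
    (h : caLt π (w ++ z) (w' ++ z)) : caLt π w w' := by
  obtain ⟨k, hu, hv, hk, hlt⟩ := h
  simp only [List.get_eq_getElem] at hlt
  have hkw : k < w.length := by
    by_contra! hkw
    simp [List.getElem_append_right, hlen ▸ hkw, hlen] at hlt
  refine ⟨k, hkw, hlen ▸ hkw, ?_, ?_⟩
  · simpa [List.take_append_of_le_length hkw.le, List.take_append_of_le_length (hlen ▸ hkw).le]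
      using hk
  · rw [List.take_append_of_le_length hkw.le] at hlt
    simpa [List.getElem_append_left hkw, List.getElem_append_left (hlen ▸ hkw)] using hlt

/-- The first difference moves from `k ≥ 1` to `k + 1`, and the contexts `u[1..k]` and
`c u[1..k]` end in the same symbol. -/
theorem IsLocalOrdering.caLt_cons (hloc : IsLocalOrdering π) {u v : List α}
    (h : caLt π u v) (hhead : u.head? = v.head?) (c : α) : caLt π (c :: u) (c :: v) := by
  obtain ⟨k, hu, hv, hk, hlt⟩ := h
  simp only [List.get_eq_getElem] at hlt
  have hk0 : k ≠ 0 := by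
    rintro rfl
    cases u <;> cases v <;> simp_all
  have hne : u.take k ≠ [] := List.ne_nil_of_length_pos (by rw [List.length_take]; omega)
  refine ⟨k + 1, by simpa, by simpa, by simp [hk], ?_⟩
  have hlast : (c :: u.take k).getLast? = (u.take k).getLast? := by
    obtain ⟨a, l, hl⟩ := List.exists_cons_of_ne_nil hne
    rw [hl, List.getLast?_cons_cons]
  rw [List.take_succ_cons]
  simpa using (hloc _ _ hne (List.cons_ne_nil _ _) hlast.symm _ _).1 hlt

theorem rot_eq_rotate {s : List α} {r : ℕ} (hr : r ≤ s.length) : rot s r = s.rotate r :=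
  (List.rotate_eq_drop_append_take hr).symm

theorem Finset.add_one_eq_min'_add_card_filter_le {n : ℕ} {S : Finset (Fin n)}
    (hS : (S : Set (Fin n)).OrdConnected) (hne : S.Nonempty) {j : Fin n} (hj : j ∈ S) :
    (j : ℕ) + 1 = S.min' hne + (S.filter (· ≤ j)).card := by
  have hIcc : S.filter (· ≤ j) = Finset.Icc (S.min' hne) j := by
    ext k
    simp only [Finset.mem_filter, Finset.mem_Icc]
    exact ⟨fun h => ⟨S.min'_le k h.1, h.2⟩,
      fun h => ⟨hS.out (S.min'_mem hne) hj h, h.2⟩⟩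
  rw [hIcc, Fin.card_Icc]
  have : (S.min' hne : ℕ) ≤ j := S.min'_le j hj
  omega

namespace SortedRotMatrix

variable {s : List α} (M : SortedRotMatrix π s)

theorem row_length (i : Fin s.length) : (M.row i).length = s.length := by
  obtain ⟨r, hr⟩ := M.row_is_rot i
  rw [hr, rot_eq_rotate r.isLt.le, List.length_rotate]

theorem lt_iff_caLt {i j : Fin s.length} : i < j ↔ caLt π (M.row i) (M.row j) := by
  refine ⟨M.sorted i j, fun h => ?_⟩
  rcases lt_trichotomy i j with hij | rfl | hji
  · exact hij
  · exact (caLt_irrefl _ h).elim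
  · exact (caLt_asymm h (M.sorted j i hji)).elim

theorem row_injective : Function.Injective M.row := by
  intro i j h
  by_contra hij
  rcases lt_or_gt_of_ne hij with hlt | hlt
  · exact caLt_irrefl _ (h ▸ M.sorted i j hlt)
  · exact caLt_irrefl _ (h ▸ M.sorted j i hlt)

theorem exists_row_eq_of_isRotated (i : Fin s.length) {l : List α} (h : l ~r M.row i) :
    ∃ j, M.row j = l := by
  obtain ⟨r, hr⟩ := M.row_is_rot i
  rw [hr, rot_eq_rotate r.isLt.le] at h
  obtain ⟨n, hn⟩ := (List.IsRotated.forall s r).symm.trans h.symm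
  have hmod := Nat.mod_lt n i.pos
  obtain ⟨j, hj⟩ := M.rot_is_row ⟨n % s.length, hmod⟩
  exact ⟨j, by rw [hj, rot_eq_rotate hmod.le, List.rotate_mod, hn]⟩

noncomputable def psi (i : Fin s.length) : Fin s.length :=
  (M.exists_row_eq_of_isRotated i (List.IsRotated.forall (M.row i) 1)).choose

theorem row_psi (i : Fin s.length) : M.row (M.psi i) = (M.row i).rotate 1 :=
  (M.exists_row_eq_of_isRotated i (List.IsRotated.forall (M.row i) 1)).choose_spec

theorem psi_injective : Function.Injective M.psi := fun i j h =>
  M.row_injective (List.rotate_injective 1 (by simpa only [row_psi] using congrArg M.row h))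

theorem exists_row_eq_cons (i : Fin s.length) :
    ∃ c w, M.row i = c :: w ∧ M.row (M.psi i) = w ++ [c] := by
  obtain ⟨c, w, hcw⟩ := List.exists_cons_of_ne_nil
    (List.ne_nil_of_length_pos (M.row_length i ▸ i.pos))
  exact ⟨c, w, hcw, by simp [row_psi, hcw]⟩

section Rng

variable [DecidableEq α]

theorem mem_Rng_iff {y : List α} {i : Fin s.length} : i ∈ Rng M y ↔ y <+: M.row i := by
  simp [Rng]

theorem mem_Rng_of_prefix {y z : List α} (h : y <+: z) {i : Fin s.length} (hi : i ∈ Rng M z) :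
    i ∈ Rng M y :=
  (M.mem_Rng_iff).2 (h.trans ((M.mem_Rng_iff).1 hi))

theorem Rng_ordConnected (y : List α) : (Rng M y : Set (Fin s.length)).OrdConnected := by
  refine ⟨fun i hi j hj k ⟨hik, hkj⟩ => ?_⟩
  simp only [Finset.mem_coe, mem_Rng_iff, List.prefix_iff_eq_take] at hi hj ⊢
  rcases hik.eq_or_lt with rfl | hik
  · exact hi
  rcases hkj.eq_or_lt with rfl | hkj
  · exact hj
  rcases (M.sorted i k hik).take_eq_or_caLt y.length with h1 | h1
  · exact hi.trans h1
  rcases (M.sorted k j hkj).take_eq_or_caLt y.length with h2 | h2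
  · exact hj.trans h2.symm
  rw [← hi] at h1
  rw [← hj] at h2
  exact (caLt_asymm h1 h2).elim

theorem mem_Rng_cons_iff {a : α} {y : List α} (hy : y.length < s.length) {j : Fin s.length} :
    j ∈ Rng M (a :: y) ↔ j ∈ Rng M [a] ∧ M.psi j ∈ Rng M y := by
  obtain ⟨c, w, hj, hpsi⟩ := M.exists_row_eq_cons j
  have hw : y.length ≤ w.length := by
    have := M.row_length j
    rw [hj, List.length_cons] at this
    omega
  simp only [mem_Rng_iff, hj, hpsi, List.cons_prefix_cons, List.nil_prefix, and_true]
  exact and_congr_right fun _ =>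
    ⟨fun h => h.trans (List.prefix_append w [c]),
      fun h => List.prefix_of_prefix_length_le h (List.prefix_append w [c]) hw⟩

theorem image_psi_Rng_pair (hn : 2 ≤ s.length) (a c : α) :
    (Rng M [a, c]).image M.psi = (Rng M [c]).filter (fun i => (M.row i).getLast? = some a) := by
  ext i
  simp only [Finset.mem_image, Finset.mem_filter, M.mem_Rng_cons_iff (y := [c]) (by simp; omega)]
  constructor
  · rintro ⟨j, ⟨hja, hjc⟩, rfl⟩
    obtain ⟨c', w, hj, hpsi⟩ := M.exists_row_eq_cons j
    rw [mem_Rng_iff, hj, List.cons_prefix_cons] at hja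
    exact ⟨hjc, by rw [hpsi, List.getLast?_concat, hja.1]⟩
  · rintro ⟨hic, hia⟩
    obtain ⟨w, hw⟩ := List.getLast?_eq_some_iff.1 hia
    obtain ⟨j, hj⟩ := M.exists_row_eq_of_isRotated i (hw ▸ (List.isRotated_concat a w).symm)
    have hpsi : M.psi j = i := M.row_injective (by simp [row_psi, hj, hw])
    exact ⟨j, ⟨(M.mem_Rng_iff).2 (by simp [hj]), hpsi ▸ hic⟩, hpsi⟩

theorem strictMonoOn_psi (hloc : IsLocalOrdering π) (a c : α) :
    StrictMonoOn M.psi (Rng M [a, c] : Set (Fin s.length)) := by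
  have reflect : ∀ j ∈ Rng M [a, c], ∀ j' ∈ Rng M [a, c], M.psi j < M.psi j' → j < j' := by
    intro j hj j' hj' hlt
    obtain ⟨z, hz⟩ := (M.mem_Rng_iff).1 hj
    obtain ⟨z', hz'⟩ := (M.mem_Rng_iff).1 hj'
    have hlen : (c :: z).length = (c :: z').length := by
      have h := M.row_length j
      have h' := M.row_length j'
      rw [← hz] at h
      rw [← hz'] at h'
      simp only [List.length_append, List.length_cons] at h h' ⊢
      omega
    rw [M.lt_iff_caLt, row_psi, row_psi, ← hz, ← hz'] at hlt
    rw [M.lt_iff_caLt, ← hz, ← hz']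
    exact hloc.caLt_cons (caLt_of_append_right (z := [a]) hlen (by simpa using hlt)) rfl a
  intro j hj j' hj' hlt
  rcases lt_trichotomy (M.psi j) (M.psi j') with h | h | h
  · exact h
  · exact absurd (M.psi_injective h) hlt.ne
  · exact absurd (reflect j' hj' j hj h) hlt.not_gt

theorem add_one_eq_min'_add_rank_psi (hloc : IsLocalOrdering π) (a c : α)
    (hne : (Rng M [a, c]).Nonempty) {j : Fin s.length} (hj : j ∈ Rng M [a, c]) :
    (j : ℕ) + 1 = (Rng M [a, c]).min' hne
      + (((Rng M [a, c]).image M.psi).filter (· ≤ M.psi j)).card := by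
  have hmono := M.strictMonoOn_psi hloc a c
  rw [Finset.filter_image, Finset.card_image_of_injective _ M.psi_injective,
    Finset.filter_congr fun k hk => hmono.le_iff_le hk hj]
  exact Finset.add_one_eq_min'_add_card_filter_le (M.Rng_ordConnected _) hne hj

end Rng

end SortedRotMatrix

end

/-- The rank `r` of `i` in `T = {i ∈ Rng [x₂] : L[i] = x₁}` is `#{j ∈ T : j ≤ i}`, and
`p = b + r − 1` is written as `p + 1 = b + r`. -/
theorem rng_backward_search_general {α : Type*} [DecidableEq α]
    (π : List α → LinearOrder α) (hloc : IsLocalOrdering π)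
    (s : List α) (M : SortedRotMatrix π s)
    (x1 x2 : α) (rest : List α) (hm : 2 + rest.length ≤ s.length)
    (hne : (Rng M [x1, x2]).Nonempty) :
    ∀ p : Fin s.length, p ∈ Rng M (x1 :: x2 :: rest) ↔
      ∃ i ∈ (Rng M [x2]).filter (fun i => (M.row i).getLast? = some x1),
        i ∈ Rng M (x2 :: rest) ∧
        (p : ℕ) + 1 = ((Rng M [x1, x2]).min' hne : ℕ)
          + (((Rng M [x2]).filter (fun i => (M.row i).getLast? = some x1)).filter
              (fun j => j ≤ i)).card := by
  intro p
  have hcons := M.mem_Rng_cons_iff (a := x1) (y := x2 :: rest) (j := p) (by simp; omega)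
  have hpair (j) := M.mem_Rng_cons_iff (a := x1) (y := [x2]) (j := j) (by simp; omega)
  rw [← M.image_psi_Rng_pair (by omega), Finset.exists_mem_image, hcons]
  constructor
  · rintro ⟨hp1, hprest⟩
    have hp : p ∈ Rng M [x1, x2] :=
      (hpair p).2 ⟨hp1, M.mem_Rng_of_prefix ((List.prefix_cons_inj x2).2 List.nil_prefix) hprest⟩
    exact ⟨p, hp, hprest, M.add_one_eq_min'_add_rank_psi hloc x1 x2 hne hp⟩
  · rintro ⟨j, hj, hjrest, hpj⟩
    have hrank := M.add_one_eq_min'_add_rank_psi hloc x1 x2 hne hj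
    obtain rfl : p = j := Fin.ext (by omega)
    exact ⟨((hpair _).1 hj).1, hjrest⟩

/-- Backward-search step for local orderings: with `T = {i ∈ Rng [x₂] : L[i] = x₁}`
listed in increasing order as `i₁ < ⋯ < i_t`, and `b = min (Rng [x₁x₂])`, the
range `Rng (x₁x₂⋯x_m)` consists exactly of the indices `b + r − 1` for those
ranks `1 ≤ r ≤ t` with `i_r ∈ Rng (x₂⋯x_m)`. (Here the rank of `i ∈ T` is
`#{j ∈ T : j ≤ i}`, and `p = b + r − 1` is written as `p + 1 = b + r`.) -/
theorem rng_backward_search {α : Type*} [Fintype α] [Nonempty α] [DecidableEq α]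
    (π : List α → LinearOrder α) (hloc : IsLocalOrdering π)
    (s : List α) (hp : IsPrimitive s) (M : SortedRotMatrix π s)
    (x1 x2 : α) (rest : List α) (hm : 2 + rest.length ≤ s.length)
    (hne : (Rng M [x1, x2]).Nonempty) :
    ∀ p : Fin s.length, p ∈ Rng M (x1 :: x2 :: rest) ↔
      ∃ i ∈ (Rng M [x2]).filter (fun i => (M.row i).getLast? = some x1),
        i ∈ Rng M (x2 :: rest) ∧
        (p : ℕ) + 1 = ((Rng M [x1, x2]).min' hne : ℕ)
          + (((Rng M [x2]).filter (fun i => (M.row i).getLast? = some x1)).filter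
              (fun j => j ≤ i)).card :=
  rng_backward_search_general π hloc s M x1 x2 rest hm hne
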